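/- arXiv:math/0404052 — 6 statements merged into one kernel-verified Lean document; each statement's English description precedes it below -/
import Mathlib

section
/- The sign of the permutation π_{ij} equals (−1)^{⌊ij/2⌋}; in particular, if i is odd and j ≡ 2 (mod 4), then π_{ij} is an odd permutation. -/
/-!
A 180° rotation is an involution, so its sign is `(-1)^(m/2)` where `m` is the number of points
it moves. The rotation of an `i × j` rectangle moves every cell except the centre, which exists
only when `i` and `j` are both odd; since the number of moved points of an involution is even,
it equals `2⌊ij/2⌋` in all cases.
-/

open Equiv Equiv.Perm Finset

theorem Equiv.Perm.sign_eq_neg_one_pow_card_support_div_two {α : Type*} [DecidableEq α]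
    [Fintype α] {σ : Perm α} (hσ : σ ^ 2 = 1) : sign σ = (-1) ^ (#σ.support / 2) := by
  rw [sign_of_pow_two_eq_one hσ, card_fixedPoints, Nat.sub_sub_self σ.sum_cycleType_le,
    sum_cycleType]

def upperLeftRect (n i j : ℕ) : Finset (Fin n × Fin n) :=
  ({a : Fin n | a.val < i} : Finset (Fin n)) ×ˢ ({b : Fin n | b.val < j} : Finset (Fin n))

@[simp]
theorem mem_upperLeftRect {n i j : ℕ} {p : Fin n × Fin n} :
    p ∈ upperLeftRect n i j ↔ p.1.val < i ∧ p.2.val < j := by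
  simp [upperLeftRect]

theorem card_upperLeftRect (n i j : ℕ) : #(upperLeftRect n i j) = min n i * min n j := by
  rw [upperLeftRect, card_product, Fin.card_filter_val_lt, Fin.card_filter_val_lt]

structure IsUpperLeftRot_s4 {n : ℕ} (i j : ℕ) (π : Perm (Fin n × Fin n)) : Prop where
  apply_of_mem : ∀ p ∈ upperLeftRect n i j,
    (π p).1.val = i - 1 - p.1.val ∧ (π p).2.val = j - 1 - p.2.val
  apply_of_notMem : ∀ p ∉ upperLeftRect n i j, π p = p

namespace IsUpperLeftRot_s4

variable {n i j : ℕ} {π : Perm (Fin n × Fin n)}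

theorem apply_mem (h : IsUpperLeftRot_s4 i j π) {p : Fin n × Fin n}
    (hp : p ∈ upperLeftRect n i j) : π p ∈ upperLeftRect n i j := by
  have := h.apply_of_mem p hp
  rw [mem_upperLeftRect] at hp ⊢
  omega

theorem sq_eq_one (h : IsUpperLeftRot_s4 i j π) : π ^ 2 = 1 := by
  ext1 p
  rw [sq, mul_apply, one_apply]
  by_cases hp : p ∈ upperLeftRect n i j
  · have hπp := h.apply_of_mem p hp
    have hππp := h.apply_of_mem (π p) (h.apply_mem hp)
    rw [mem_upperLeftRect] at hp
    exact Prod.ext (Fin.ext (by omega)) (Fin.ext (by omega))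
  · rw [h.apply_of_notMem p hp, h.apply_of_notMem p hp]

theorem support_subset (h : IsUpperLeftRot_s4 i j π) : π.support ⊆ upperLeftRect n i j := by
  intro p hp
  by_contra hp'
  exact mem_support.mp hp (h.apply_of_notMem p hp')

/-- The only possible fixed cell of the rectangle is its centre. -/
theorem card_upperLeftRect_sdiff_support_le_one (h : IsUpperLeftRot_s4 i j π) :
    #(upperLeftRect n i j \ π.support) ≤ 1 := by
  have hcentre : ∀ p ∈ upperLeftRect n i j \ π.support,
      2 * p.1.val + 1 = i ∧ 2 * p.2.val + 1 = j := by
    intro p hp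
    rw [mem_sdiff, notMem_support] at hp
    have hπp := h.apply_of_mem p hp.1
    rw [hp.2] at hπp
    rw [mem_upperLeftRect] at hp
    omega
  refine card_le_one.mpr fun p hp q hq => ?_
  have := hcentre p hp
  have := hcentre q hq
  exact Prod.ext (Fin.ext (by omega)) (Fin.ext (by omega))

theorem sign_eq (h : IsUpperLeftRot_s4 i j π) (hi : i ≤ n) (hj : j ≤ n) :
    sign π = (-1) ^ (i * j / 2) := by
  have hcard : #(upperLeftRect n i j) = i * j := by
    rw [card_upperLeftRect, min_eq_right hi, min_eq_right hj]
  have hfixed := h.card_upperLeftRect_sdiff_support_le_one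
  rw [card_sdiff_of_subset h.support_subset, hcard] at hfixed
  have hle := card_le_card h.support_subset
  have heven := two_dvd_card_support h.sq_eq_one
  rw [hcard] at hle
  rw [sign_eq_neg_one_pow_card_support_div_two h.sq_eq_one]
  congr 1
  omega

end IsUpperLeftRot_s4

/-- The sign of the rotation `π_{ij}` of the upper-left `i × j` rectangle of the
`n × n` array is `(-1)^⌊ij/2⌋`; in particular `π_{ij}` is odd when `i` is odd and
`j ≡ 2 (mod 4)`.  The permutation is encoded on `Fin n × Fin n` via 1-based
coordinate values. -/
theorem sign_upperLeftRot (n i j : ℕ) (hi : 1 ≤ i ∧ i ≤ n) (hj : 1 ≤ j ∧ j ≤ n)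
    (π : Equiv.Perm (Fin n × Fin n))
    (hπ : ∀ p : Fin n × Fin n,
      (((π p).1.val + 1, (π p).2.val + 1) : ℕ × ℕ) =
        if p.1.val + 1 ≤ i ∧ p.2.val + 1 ≤ j
        then (i + 1 - (p.1.val + 1), j + 1 - (p.2.val + 1))
        else (p.1.val + 1, p.2.val + 1)) :
    Equiv.Perm.sign π = (-1 : ℤˣ) ^ (i * j / 2) ∧
      (Odd i → j % 4 = 2 → Equiv.Perm.sign π = -1) := by
  have hrot : IsUpperLeftRot_s4 i j π := by
    constructor
    · intro p hp
      have := hπ p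
      rw [mem_upperLeftRect] at hp
      rw [if_pos (by omega), Prod.mk.injEq] at this
      omega
    · intro p hp
      have := hπ p
      rw [mem_upperLeftRect] at hp
      rw [if_neg (by omega), Prod.mk.injEq] at this
      exact Prod.ext (Fin.ext (by omega)) (Fin.ext (by omega))
  have hsign := hrot.sign_eq hi.2 hj.2
  refine ⟨hsign, fun hi_odd hj_mod => ?_⟩
  obtain ⟨k, rfl⟩ : ∃ k, j = 2 * (2 * k + 1) := ⟨j / 4, by omega⟩
  rw [hsign, mul_left_comm, Nat.mul_div_cancel_left _ two_pos]
  exact (hi_odd.mul (odd_two_mul_add_one k)).neg_one_pow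
end

section
/- For any two positions p = (i₁,j₁) and q = (i₂,j₂) of the n×n array both lying in the upper-left corner region A = {(i,j) : i,j ≤ n/3} (or both in the lower-right region B = {(i,j) : i,j ≥ 2n/3}, or one in each), the set of positions reachable in a single shuffle move from both p and q has cardinality at least n²/9, where reachability from (i,j) means lying in the set {(a,b) : (n+1−a−i)(n+1−b−j) ≥ 0}. -/
open Finset

/-- The single-move jump set of position `(i,j)` in the `n × n` array:
positions `(a,b)` with `(n+1-a-i)(n+1-b-j) ≥ 0` (as integers). -/
def jumpSet (n : ℕ) (p : ℕ × ℕ) : Finset (ℕ × ℕ) :=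
  (Finset.Icc 1 n ×ˢ Finset.Icc 1 n).filter
    (fun q => 0 ≤ ((n : ℤ) + 1 - q.1 - p.1) * ((n : ℤ) + 1 - q.2 - p.2))

/-!
For `n = 3m`, both factors `n + 1 - a - i` and `n + 1 - b - j` are nonnegative when
`(i, j)` lies in the upper-left corner and `(a, b)` in the middle square `[m+1, 2m]²`, and both
are nonpositive when `(i, j)` lies in the lower-right corner. So the middle square, of size `m²`,
lies in every jump set from `A ∪ B`, hence in any intersection of two of them.
-/

def middleSquare (m : ℕ) : Finset (ℕ × ℕ) :=
  Icc (m + 1) (2 * m) ×ˢ Icc (m + 1) (2 * m)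

lemma card_middleSquare (m : ℕ) : #(middleSquare m) = m ^ 2 := by
  rw [middleSquare, card_product, Nat.card_Icc, sq]
  congr 1 <;> omega

lemma middleSquare_subset_jumpSet {m : ℕ} {p : ℕ × ℕ}
    (hp : (p.1 ≤ m + 1 ∧ p.2 ≤ m + 1) ∨ (2 * m ≤ p.1 ∧ 2 * m ≤ p.2)) :
    middleSquare m ⊆ jumpSet (3 * m) p := by
  rintro ⟨a, b⟩ hab
  simp only [middleSquare, mem_product, mem_Icc] at hab
  simp only [jumpSet, mem_filter, mem_product, mem_Icc]
  refine ⟨by omega, ?_⟩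
  push_cast
  rcases hp with ⟨h1, h2⟩ | ⟨h1, h2⟩
  · exact mul_nonneg (by omega) (by omega)
  · exact mul_nonneg_of_nonpos_of_nonpos (by omega) (by omega)

theorem jumpSet_common_lower_bound_general (n : ℕ) (h3 : 3 ∣ n)
    (p q : ℕ × ℕ)
    (hp : (1 ≤ p.1 ∧ p.1 ≤ n / 3 ∧ 1 ≤ p.2 ∧ p.2 ≤ n / 3) ∨
          (2 * n / 3 ≤ p.1 ∧ p.1 ≤ n ∧ 2 * n / 3 ≤ p.2 ∧ p.2 ≤ n))
    (hq : (1 ≤ q.1 ∧ q.1 ≤ n / 3 ∧ 1 ≤ q.2 ∧ q.2 ≤ n / 3) ∨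
          (2 * n / 3 ≤ q.1 ∧ q.1 ≤ n ∧ 2 * n / 3 ≤ q.2 ∧ q.2 ≤ n)) :
    n ^ 2 / 9 ≤ (jumpSet n p ∩ jumpSet n q).card := by
  obtain ⟨m, rfl⟩ := h3
  calc (3 * m) ^ 2 / 9 = #(middleSquare m) := by rw [card_middleSquare]; ring_nf; omega
    _ ≤ #(jumpSet (3 * m) p ∩ jumpSet (3 * m) q) :=
      card_le_card <| subset_inter (middleSquare_subset_jumpSet (by omega))
        (middleSquare_subset_jumpSet (by omega))

/-- For any two positions in `A ∪ B` (upper-left and lower-right corner `n/3 × n/3`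
squares), the set of positions reachable in a single move from both has cardinality
at least `n²/9`. -/
theorem jumpSet_common_lower_bound (n : ℕ) (hn : 0 < n) (h3 : 3 ∣ n)
    (p q : ℕ × ℕ)
    (hp : (1 ≤ p.1 ∧ p.1 ≤ n / 3 ∧ 1 ≤ p.2 ∧ p.2 ≤ n / 3) ∨
          (2 * n / 3 ≤ p.1 ∧ p.1 ≤ n ∧ 2 * n / 3 ≤ p.2 ∧ p.2 ≤ n))
    (hq : (1 ≤ q.1 ∧ q.1 ≤ n / 3 ∧ 1 ≤ q.2 ∧ q.2 ≤ n / 3) ∨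
          (2 * n / 3 ≤ q.1 ∧ q.1 ≤ n ∧ 2 * n / 3 ≤ q.2 ∧ q.2 ≤ n)) :
    n ^ 2 / 9 ≤ (jumpSet n p ∩ jumpSet n q).card :=
  jumpSet_common_lower_bound_general n h3 p q hp hq
end

section
/- If the measure S gives probability 1/(2n²) to each of the 2n² permutations π_{ij}, π'_{ij}, then the expected value of the sign character under S is at most 3/4; that is, (1/(2n²)) Σ_{i,j} (sign(π_{ij}) + sign(π'_{ij})) ≤ 3/4 for all n ≥ 4. -/
/-!
By the parities of `i = 2a + ε` and `j = 2b + δ`, the sign `(-1)^⌊ij/2⌋` is `1`, `(-1)^a`,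
`(-1)^b` or `(-1)^(a+b)`, hence a sum of four products `f i * g j`, and the double sum over
`[1, n]²` factorises into one-dimensional sums: `⌊n/2⌋²` from the even-even block, plus twice
(an alternating sum in `{-1, 0}`) times (the number of odd indices), plus the square of an
alternating sum in `{0, 1}`. So it is at most `n²/4 + 1`. The reflection `i ↦ n + 1 - i` shows
that the `π'` generators contribute the same sum as the `π` generators, so the average is at
most `1/4 + 1/n²`.
-/

open Finset

noncomputable def evenInd (i : ℕ) : ℝ := if Even i then 1 else 0

noncomputable def oddInd (i : ℕ) : ℝ := if Even i then 0 else 1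

noncomputable def halfSign (i : ℕ) : ℝ := (-1) ^ (i / 2)

@[simp] lemma evenInd_two_mul (k : ℕ) : evenInd (2 * k) = 1 := by simp [evenInd]

@[simp] lemma evenInd_two_mul_add_one (k : ℕ) : evenInd (2 * k + 1) = 0 := by
  simp [evenInd, parity_simps]

@[simp] lemma oddInd_two_mul (k : ℕ) : oddInd (2 * k) = 0 := by simp [oddInd]

@[simp] lemma oddInd_two_mul_add_one (k : ℕ) : oddInd (2 * k + 1) = 1 := by
  simp [oddInd, parity_simps]

@[simp] lemma halfSign_two_mul (k : ℕ) : halfSign (2 * k) = (-1) ^ k := by simp [halfSign]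

@[simp] lemma halfSign_two_mul_add_one (k : ℕ) : halfSign (2 * k + 1) = (-1) ^ k := by
  simp [halfSign, Nat.mul_add_div]

lemma oddInd_nonneg (i : ℕ) : 0 ≤ oddInd i := by unfold oddInd; split <;> norm_num

lemma neg_one_pow_mul_div_two (i j : ℕ) :
    (-1 : ℝ) ^ (i * j / 2) =
      evenInd i * evenInd j + evenInd i * halfSign i * oddInd j
        + oddInd i * (evenInd j * halfSign j)
        + oddInd i * halfSign i * (oddInd j * halfSign j) := by
  obtain ⟨a, rfl | rfl⟩ := Nat.even_or_odd' i <;>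
    obtain ⟨b, rfl | rfl⟩ := Nat.even_or_odd' j
  · rw [mul_assoc, Nat.mul_div_cancel_left _ two_pos, Even.neg_one_pow ⟨a * b, by ring⟩]; simp
  · rw [mul_assoc, Nat.mul_div_cancel_left _ two_pos, mul_comm, pow_mul,
      Odd.neg_one_pow (odd_two_mul_add_one b)]
    simp
  · rw [mul_comm, mul_assoc, Nat.mul_div_cancel_left _ two_pos, mul_comm, pow_mul,
      Odd.neg_one_pow (odd_two_mul_add_one a)]
    simp
  · have : (2 * a + 1) * (2 * b + 1) / 2 = 2 * (a * b) + a + b := by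
      rw [show (2 * a + 1) * (2 * b + 1) = 2 * (2 * (a * b) + a + b) + 1 by ring]; omega
    rw [this, pow_add, pow_add, pow_mul]; simp

lemma sum_sum_neg_one_pow_mul_div_two (s : Finset ℕ) :
    ∑ i ∈ s, ∑ j ∈ s, (-1 : ℝ) ^ (i * j / 2) =
      (∑ i ∈ s, evenInd i) ^ 2
        + 2 * (∑ i ∈ s, evenInd i * halfSign i) * ∑ i ∈ s, oddInd i
        + (∑ i ∈ s, oddInd i * halfSign i) ^ 2 := by
  simp only [neg_one_pow_mul_div_two, sum_add_distrib, ← sum_mul_sum]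
  ring

lemma sum_Icc_one_reflect {M : Type*} [AddCommMonoid M] (n : ℕ) (f : ℕ → M) :
    ∑ i ∈ Icc 1 n, f (n + 1 - i) = ∑ i ∈ Icc 1 n, f i := by
  refine sum_nbij' (fun i ↦ n + 1 - i) (fun i ↦ n + 1 - i) ?_ ?_ ?_ ?_ (fun _ _ ↦ rfl) <;>
    intro i hi <;> simp only [mem_Icc] at hi ⊢ <;> omega

lemma sum_Icc_evenInd (n : ℕ) : ∑ i ∈ Icc 1 n, evenInd i = (n / 2 : ℕ) := by
  induction n with
  | zero => simp
  | succ n ih =>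
    rw [sum_Icc_succ_top (Nat.le_add_left 1 n), ih]
    obtain ⟨k, rfl | rfl⟩ := Nat.even_or_odd' n
    · simp [Nat.mul_add_div]
    · rw [show 2 * k + 1 + 1 = 2 * (k + 1) by ring]; simp [Nat.mul_add_div]

lemma sum_Icc_evenInd_mul_halfSign (n : ℕ) :
    ∑ i ∈ Icc 1 n, evenInd i * halfSign i = ((-1) ^ (n / 2) - 1) / 2 := by
  induction n with
  | zero => simp
  | succ n ih =>
    rw [sum_Icc_succ_top (Nat.le_add_left 1 n), ih]
    obtain ⟨k, rfl | rfl⟩ := Nat.even_or_odd' n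
    · simp [Nat.mul_add_div]
    · rw [show 2 * k + 1 + 1 = 2 * (k + 1) by ring, evenInd_two_mul, halfSign_two_mul,
        Nat.mul_div_cancel_left _ two_pos, show (2 * k + 1) / 2 = k by omega]
      ring

lemma sum_Icc_oddInd_mul_halfSign (n : ℕ) :
    ∑ i ∈ Icc 1 n, oddInd i * halfSign i = (1 - (-1) ^ ((n + 1) / 2)) / 2 := by
  induction n with
  | zero => simp
  | succ n ih =>
    rw [sum_Icc_succ_top (Nat.le_add_left 1 n), ih]
    obtain ⟨k, rfl | rfl⟩ := Nat.even_or_odd' n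
    · rw [oddInd_two_mul_add_one, halfSign_two_mul_add_one, show (2 * k + 1) / 2 = k by omega,
        show (2 * k + 1 + 1) / 2 = k + 1 by omega]
      ring
    · rw [show 2 * k + 1 + 1 = 2 * (k + 1) by ring]
      simp [Nat.mul_add_div]

lemma sum_Icc_sum_Icc_neg_one_pow_mul_div_two_le (n : ℕ) :
    ∑ i ∈ Icc 1 n, ∑ j ∈ Icc 1 n, (-1 : ℝ) ^ (i * j / 2) ≤ (n : ℝ) ^ 2 / 4 + 1 := by
  rw [sum_sum_neg_one_pow_mul_div_two, sum_Icc_evenInd, sum_Icc_evenInd_mul_halfSign,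
    sum_Icc_oddInd_mul_halfSign]
  have hE : ((n / 2 : ℕ) : ℝ) ≤ n / 2 := by exact_mod_cast Nat.cast_div_le (α := ℝ)
  have hT : ((-1 : ℝ) ^ (n / 2) - 1) / 2 ≤ 0 := by
    rcases neg_one_pow_eq_or ℝ (n / 2) with h | h <;> rw [h] <;> norm_num
  have hU : ((1 - (-1 : ℝ) ^ ((n + 1) / 2)) / 2) ^ 2 ≤ 1 := by
    rcases neg_one_pow_eq_or ℝ ((n + 1) / 2) with h | h <;> rw [h] <;> norm_num
  have hO : 0 ≤ ∑ i ∈ Icc 1 n, oddInd i := sum_nonneg fun i _ ↦ oddInd_nonneg i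
  nlinarith [Nat.cast_nonneg (α := ℝ) (n / 2), mul_nonpos_of_nonpos_of_nonneg hT hO]

/-- The average of the sign character over the `2n²` generators `π_{ij}`, `π'_{ij}`
is at most `3/4` for `n ≥ 4`.  The sign of a 180° rotation of an `a × b` rectangle
is `(-1)^⌊ab/2⌋`; `π_{ij}` rotates an `i × j` rectangle and `π'_{ij}` rotates an
`(n+1-i) × (n+1-j)` rectangle. -/
theorem average_sign_le (n : ℕ) (hn : 4 ≤ n) :
    (1 / (2 * (n : ℝ) ^ 2)) *
      ∑ i ∈ Finset.Icc 1 n, ∑ j ∈ Finset.Icc 1 n,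
        ((-1 : ℝ) ^ (i * j / 2) + (-1 : ℝ) ^ ((n + 1 - i) * (n + 1 - j) / 2)) ≤ 3 / 4 := by
  have hreflect :
      ∑ i ∈ Icc 1 n, ∑ j ∈ Icc 1 n, (-1 : ℝ) ^ ((n + 1 - i) * (n + 1 - j) / 2) =
        ∑ i ∈ Icc 1 n, ∑ j ∈ Icc 1 n, (-1 : ℝ) ^ (i * j / 2) := by
    rw [sum_Icc_one_reflect n fun i ↦ ∑ j ∈ Icc 1 n, (-1 : ℝ) ^ (i * (n + 1 - j) / 2)]
    exact sum_congr rfl fun i _ ↦ sum_Icc_one_reflect n fun j ↦ (-1 : ℝ) ^ (i * j / 2)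
  have hn' : (4 : ℝ) ≤ n := by exact_mod_cast hn
  simp only [sum_add_distrib]
  rw [hreflect, one_div_mul_eq_div, div_le_iff₀ (by positivity)]
  nlinarith [sum_Icc_sum_Icc_neg_one_pow_mul_div_two_le n]
end

section
/- Every 3-cycle on the n×n array positions (n ≥ 10) can be written as a product of at most 640 of the permutations π_{ij}; consequently the permutations {π_{ij}} generate the alternating group on the n² positions (together with odd π_{ij}'s, the full symmetric group). -/
/-!
Each rotation `π_c` is an involution that exchanges the cell `c` with the corner `(0, 0)` and
fixes every cell outside its rectangle; `π_{(0,1)}` and `π_{(1,0)}` are the transpositions of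
`(0, 0)` with its two neighbours, so their product is a 3-cycle. Seven rotations carry any three
distinct cells to `(0, 1)`, `(0, 0)`, `(1, 0)`: park the cells one at a time on the far cells
`π_⊤ (0, 0)`, `π_⊤ (0, 1)`, `π_⊤ (1, 0)`, each by a rotation onto `(0, 0)` followed by one out of
`(0, 0)`, neither of whose rectangles contains a cell parked earlier, and finish with the full
rotation `π_⊤`. Conjugating the base 3-cycle by this word gives every 3-cycle as a word of
length `7 + 2 + 7 = 16`.
-/

/-- `σ` is one of the rotations `π_{ij}` of the upper-left rectangle of the `n × n`
array (0-based coordinates on `Fin n`: `(r,s) ↦ (i-r, j-s)` for `r ≤ i`, `s ≤ j`). -/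
def IsUpperLeftRot {n : ℕ} (σ : Equiv.Perm (Fin n × Fin n)) : Prop :=
  ∃ i j : Fin n, ∀ p : Fin n × Fin n,
    σ p = if p.1 ≤ i ∧ p.2 ≤ j then (i - p.1, j - p.2) else p

section WordLength

variable {G : Type*} [Group G]

def IsProdOfAtMost (S : Set G) (k : ℕ) (g : G) : Prop :=
  ∃ L : List G, L.length ≤ k ∧ (∀ s ∈ L, s ∈ S) ∧ L.prod = g

namespace IsProdOfAtMost

variable {S : Set G} {k l : ℕ} {g h : G}

theorem of_mem (hg : g ∈ S) : IsProdOfAtMost S 1 g :=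
  ⟨[g], le_rfl, by simpa using hg, List.prod_singleton⟩

theorem mul (hg : IsProdOfAtMost S k g) (hh : IsProdOfAtMost S l h) :
    IsProdOfAtMost S (k + l) (g * h) := by
  obtain ⟨L, hL, hLS, rfl⟩ := hg
  obtain ⟨M, hM, hMS, rfl⟩ := hh
  refine ⟨L ++ M, by simp; omega, fun s hs => ?_, List.prod_append⟩
  rcases List.mem_append.1 hs with hs | hs
  exacts [hLS s hs, hMS s hs]

theorem inv (hg : IsProdOfAtMost S k g) (hS : ∀ s ∈ S, s⁻¹ ∈ S) : IsProdOfAtMost S k g⁻¹ := by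
  obtain ⟨L, hL, hLS, rfl⟩ := hg
  refine ⟨(L.map (·⁻¹)).reverse, by simpa using hL, fun s hs => ?_, (List.prod_inv_reverse L).symm⟩
  obtain ⟨t, ht, rfl⟩ := List.mem_map.1 (List.mem_reverse.1 hs)
  exact hS t (hLS t ht)

theorem mono (hkl : k ≤ l) (hg : IsProdOfAtMost S k g) : IsProdOfAtMost S l g :=
  let ⟨L, hL, hLS, hLg⟩ := hg
  ⟨L, hL.trans hkl, hLS, hLg⟩

theorem mem_closure (hg : IsProdOfAtMost S k g) : g ∈ Subgroup.closure S := by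
  obtain ⟨L, -, hLS, rfl⟩ := hg
  exact Subgroup.list_prod_mem _ fun s hs => Subgroup.subset_closure (hLS s hs)

end IsProdOfAtMost

end WordLength

namespace Fin

variable {n : ℕ} {a b c : Fin n}

theorem sub_le_self_of_le (h : b ≤ a) : a - b ≤ a := by
  rw [Fin.le_def, Fin.coe_sub_iff_le.2 h]
  exact Nat.sub_le _ _

theorem sub_le_sub_left_iff (ha : a ≤ c) (hb : b ≤ c) : c - a ≤ c - b ↔ b ≤ a := by
  simp only [Fin.le_def, Fin.coe_sub_iff_le.2 ha, Fin.coe_sub_iff_le.2 hb] at *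
  omega

theorem eq_zero_or_eq_one_of_le_one {m : ℕ} {y : Fin (m + 2)} (h : y ≤ 1) : y = 0 ∨ y = 1 := by
  rw [Fin.le_def, Fin.val_one] at h
  rcases Nat.le_one_iff_eq_zero_or_eq_one.1 h with h | h
  exacts [.inl (Fin.ext h), .inr (Fin.ext (h.trans (Fin.val_one m).symm))]

end Fin

namespace UpperLeftRot

open Equiv Equiv.Perm

section

variable {n : ℕ} [NeZero n] {c x y : Fin n × Fin n}

/-- `π_{ij}` for the corner `c = (i, j)`. The subtraction `c - x` is taken modulo `n` in each
coordinate, which is the true difference because `x ≤ c`. -/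
def rectRot (c : Fin n × Fin n) : Perm (Fin n × Fin n) :=
  Function.Involutive.toPerm (fun x => if x ≤ c then c - x else x) fun x => by
    by_cases hx : x ≤ c
    · simp [hx, Fin.sub_le_self_of_le hx.1, Fin.sub_le_self_of_le hx.2, Prod.le_def]
    · simp [hx]

theorem rectRot_apply_of_le (h : x ≤ c) : rectRot c x = c - x := if_pos h

theorem rectRot_apply_of_not_le (h : ¬x ≤ c) : rectRot c x = x := if_neg h

@[simp]
theorem rectRot_rectRot : rectRot c (rectRot c x) = x :=
  Function.Involutive.toPerm_involutive _ x

@[simp]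
theorem rectRot_inv : (rectRot c)⁻¹ = rectRot c :=
  Function.Involutive.toPerm_symm _

@[simp]
theorem rectRot_self : rectRot c c = 0 := by
  rw [rectRot_apply_of_le le_rfl, sub_self]

@[simp]
theorem rectRot_zero : rectRot c 0 = c := by
  rw [rectRot_apply_of_le ⟨Fin.zero_le _, Fin.zero_le _⟩, sub_zero]

theorem rectRot_le_rectRot_iff (hx : x ≤ c) (hy : y ≤ c) :
    rectRot c x ≤ rectRot c y ↔ y ≤ x := by
  simp only [rectRot_apply_of_le hx, rectRot_apply_of_le hy, Prod.le_def, Prod.fst_sub,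
    Prod.snd_sub, Fin.sub_le_sub_left_iff hx.1 hy.1, Fin.sub_le_sub_left_iff hx.2 hy.2]

theorem rectRot_eq_swap (hc : ∀ y ≤ c, y = 0 ∨ y = c) : rectRot c = swap 0 c := by
  ext1 x
  by_cases hx : x ≤ c
  · rcases hc x hx with rfl | rfl <;> simp
  · have h0 : x ≠ 0 := fun h => hx (h ▸ ⟨Fin.zero_le _, Fin.zero_le _⟩)
    have hc : x ≠ c := fun h => hx h.le
    rw [rectRot_apply_of_not_le hx, swap_apply_of_ne_of_ne h0 hc]

theorem isUpperLeftRot_iff {σ : Perm (Fin n × Fin n)} : IsUpperLeftRot σ ↔ ∃ c, σ = rectRot c :=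
  ⟨fun ⟨i, j, hσ⟩ => ⟨(i, j), Equiv.ext hσ⟩, fun ⟨⟨i, j⟩, hσ⟩ => ⟨i, j, fun _ => hσ ▸ rfl⟩⟩

theorem isProdOfAtMost_rectRot : IsProdOfAtMost {τ | IsUpperLeftRot τ} 1 (rectRot c) :=
  .of_mem (isUpperLeftRot_iff.2 ⟨c, rfl⟩)

theorem _root_.IsUpperLeftRot.inv {σ : Perm (Fin n × Fin n)} (hσ : IsUpperLeftRot σ) :
    IsUpperLeftRot σ⁻¹ := by
  obtain ⟨c, rfl⟩ := isUpperLeftRot_iff.1 hσ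
  rwa [rectRot_inv]

theorem rectRot_mul_rectRot_apply_self (t : Fin n × Fin n) : (rectRot t * rectRot x) x = t := by
  simp

theorem rectRot_mul_rectRot_apply_of_not_le {t : Fin n × Fin n} (hx : ¬y ≤ x) (ht : ¬y ≤ t) :
    (rectRot t * rectRot x) y = y := by
  rw [Perm.mul_apply, rectRot_apply_of_not_le hx, rectRot_apply_of_not_le ht]

theorem rectRot_top_apply_ne_top (hy : y ≠ 0) : rectRot ⊤ y ≠ ⊤ :=
  fun h => hy ((rectRot ⊤).injective (h.trans rectRot_zero.symm))

theorem rectRot_mul_rectRot_apply_top {t : Fin n × Fin n} (hx : x ≠ ⊤) (ht : t ≠ ⊤) :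
    (rectRot t * rectRot x) ⊤ = ⊤ :=
  rectRot_mul_rectRot_apply_of_not_le (by rwa [top_le_iff]) (by rwa [top_le_iff])

end

section

variable {m : ℕ}

theorem eq_zero_or_eq_of_le_zero_one {y : Fin (m + 2) × Fin (m + 2)} (h : y ≤ (0, 1)) :
    y = 0 ∨ y = (0, 1) := by
  obtain ⟨y₁, y₂⟩ := y
  obtain ⟨h₁ : y₁ ≤ 0, h₂ : y₂ ≤ 1⟩ := h
  rw [nonpos_iff_eq_zero] at h₁
  rcases Fin.eq_zero_or_eq_one_of_le_one h₂ with rfl | rfl <;> simp [h₁]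

theorem eq_zero_or_eq_of_le_one_zero {y : Fin (m + 2) × Fin (m + 2)} (h : y ≤ (1, 0)) :
    y = 0 ∨ y = (1, 0) := by
  obtain ⟨y₁, y₂⟩ := y
  obtain ⟨h₁ : y₁ ≤ 1, h₂ : y₂ ≤ 0⟩ := h
  rw [nonpos_iff_eq_zero] at h₂
  rcases Fin.eq_zero_or_eq_one_of_le_one h₁ with rfl | rfl <;> simp [h₂]

theorem eq_top_or_eq_of_rectRot_top_zero_one_le {y : Fin (m + 2) × Fin (m + 2)}
    (h : rectRot ⊤ (0, 1) ≤ y) : y = ⊤ ∨ y = rectRot ⊤ (0, 1) := by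
  rw [← rectRot_rectRot (c := ⊤) (x := y), rectRot_le_rectRot_iff le_top le_top] at h
  rcases eq_zero_or_eq_of_le_zero_one h with h | h
  · exact .inl (rectRot_rectRot.symm.trans (h ▸ rectRot_zero))
  · exact .inr (rectRot_rectRot.symm.trans (congrArg _ h))

theorem not_rectRot_top_zero_one_le_rectRot_top_one_zero :
    ¬rectRot (⊤ : Fin (m + 2) × Fin (m + 2)) (0, 1) ≤ rectRot ⊤ (1, 0) := by
  rw [rectRot_le_rectRot_iff le_top le_top]
  simp [Prod.le_def]

theorem exists_isProdOfAtMost_apply_eq {a b c : Fin (m + 2) × Fin (m + 2)} (hab : a ≠ b)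
    (hac : a ≠ c) (hbc : b ≠ c) :
    ∃ h, IsProdOfAtMost {τ | IsUpperLeftRot τ} 7 h ∧ h a = 0 ∧ h b = (0, 1) ∧ h c = (1, 0) := by
  set ρ := rectRot (⊤ : Fin (m + 2) × Fin (m + 2))
  set U := ρ (0, 1)
  set V := ρ (1, 0)
  have hU : U ≠ ⊤ := rectRot_top_apply_ne_top (by simp)
  have hV : V ≠ ⊤ := rectRot_top_apply_ne_top (by simp)
  set g₁ := ρ * rectRot a
  have g₁a : g₁ a = ⊤ := rectRot_mul_rectRot_apply_self _
  set b₁ := g₁ b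
  have hb₁ : b₁ ≠ ⊤ := g₁a ▸ g₁.injective.ne hab.symm
  set g₂ := rectRot U * rectRot b₁
  have g₂b₁ : g₂ b₁ = U := rectRot_mul_rectRot_apply_self _
  have g₂_top : g₂ ⊤ = ⊤ := rectRot_mul_rectRot_apply_top hb₁ hU
  set c₂ := g₂ (g₁ c)
  have hc₂_top : c₂ ≠ ⊤ := g₂_top ▸ g₁a ▸ (g₂.injective.comp g₁.injective).ne hac.symm
  have hc₂_U : c₂ ≠ U := g₂b₁ ▸ (g₂.injective.comp g₁.injective).ne hbc.symm
  set g₃ := rectRot V * rectRot c₂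
  have g₃c₂ : g₃ c₂ = V := rectRot_mul_rectRot_apply_self _
  have g₃_top : g₃ ⊤ = ⊤ := rectRot_mul_rectRot_apply_top hc₂_top hV
  have g₃U : g₃ U = U := by
    refine rectRot_mul_rectRot_apply_of_not_le (fun h => ?_)
      not_rectRot_top_zero_one_le_rectRot_top_one_zero
    rcases eq_top_or_eq_of_rectRot_top_zero_one_le h with h | h
    exacts [hc₂_top h, hc₂_U h]
  have hword {x t : Fin (m + 2) × Fin (m + 2)} :
      IsProdOfAtMost {τ | IsUpperLeftRot τ} 2 (rectRot t * rectRot x) :=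
    isProdOfAtMost_rectRot.mul isProdOfAtMost_rectRot
  refine ⟨ρ * g₃ * g₂ * g₁, ((isProdOfAtMost_rectRot.mul hword).mul hword).mul hword, ?_, ?_, ?_⟩
  · simp only [Perm.mul_apply]
    rw [g₁a, g₂_top, g₃_top]
    exact rectRot_self
  · simp only [Perm.mul_apply]
    rw [g₂b₁, g₃U, rectRot_rectRot]
  · simp only [Perm.mul_apply]
    rw [g₃c₂, rectRot_rectRot]

theorem isProdOfAtMost_of_isThreeCycle {σ : Perm (Fin (m + 2) × Fin (m + 2))}
    (hσ : σ.IsThreeCycle) : IsProdOfAtMost {τ | IsUpperLeftRot τ} 16 σ := by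
  obtain ⟨p, hp⟩ : σ.support.Nonempty := Finset.card_pos.1 (by rw [hσ.card_support]; norm_num)
  have hσp := hσ.eq_swap_mul_swap_iff_mem_support.2 hp
  have hdistinct := hσ.nodup_iff_mem_support.2 hp
  simp only [List.nodup_cons, List.mem_cons, List.not_mem_nil, or_false, not_or] at hdistinct
  obtain ⟨⟨hpq, hpr⟩, hqr, -⟩ := hdistinct
  obtain ⟨h, hh, hq, hp, hr⟩ := exists_isProdOfAtMost_apply_eq (Ne.symm hpq) hqr hpr
  have hconj : h * σ * h⁻¹ = rectRot (0, 1) * rectRot (1, 0) := by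
    conv_lhs => rw [hσp]
    rw [rectRot_eq_swap fun _ => eq_zero_or_eq_of_le_zero_one,
      rectRot_eq_swap fun _ => eq_zero_or_eq_of_le_one_zero, ← hq, ← hp, ← hr,
      swap_comm (h _), swap_apply_apply h, swap_apply_apply h]
    group
  rw [show σ = h⁻¹ * (h * σ * h⁻¹) * h by group, hconj]
  exact ((hh.inv fun _ hτ => IsUpperLeftRot.inv hτ).mul
    (isProdOfAtMost_rectRot.mul isProdOfAtMost_rectRot)).mul hh

end

end UpperLeftRot

/-- For `n ≥ 10`, every 3-cycle on the `n × n` array positions is a product of at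
most `640` of the permutations `π_{ij}`; consequently the `π_{ij}` generate (at
least) the alternating group. -/
theorem threeCycle_word_length (n : ℕ) (hn : 10 ≤ n) :
    (∀ σ : Equiv.Perm (Fin n × Fin n), σ.IsThreeCycle →
      ∃ L : List (Equiv.Perm (Fin n × Fin n)),
        L.length ≤ 640 ∧ (∀ τ ∈ L, IsUpperLeftRot τ) ∧ L.prod = σ) ∧
    alternatingGroup (Fin n × Fin n) ≤
      Subgroup.closure {τ : Equiv.Perm (Fin n × Fin n) | IsUpperLeftRot τ} := by
  obtain ⟨m, rfl⟩ : ∃ m, n = m + 2 := ⟨n - 2, by omega⟩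
  have h3 (σ : Equiv.Perm (Fin (m + 2) × Fin (m + 2))) (hσ : σ.IsThreeCycle) :
      IsProdOfAtMost {τ | IsUpperLeftRot τ} 640 σ :=
    (UpperLeftRot.isProdOfAtMost_of_isThreeCycle hσ).mono (by norm_num)
  refine ⟨h3, ?_⟩
  rw [← Equiv.Perm.closure_three_cycles_eq_alternating, Subgroup.closure_le]
  exact fun σ hσ => (h3 σ hσ).mem_closure
end

section
/- Let t = (t₁ ≥ t₂ ≥ ⋯) be a partition of m ≥ 3 with t₁ ≥ m/2, and let r(t) = (3 Σ_{(i,j)∈Young(t)} (i−j)²)/(m(m−1)(m−2)) − 3/(2(m−2)). Then r(t) ≤ 1 − 3(t₁−1)(m−t₁)/((m−1)(m−2)). -/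
/-!
Deleting the first row, the cells of the remaining rows can be numbered injectively by
`1, …, m - t₁`, reading row after row, in such a way that the cell `(i, j)` receives a number
`≥ |i - j|`: since the rows are nonincreasing, every row above a nonempty row `i ≥ 2` is
nonempty, so at least `i - 2` cells precede row `i`. Hence `Σ (i - j)²` is at most its value on
the hook `(t₁, 1^(m - t₁))`, for which `r` is exactly the right-hand side.
-/

open Finset

/-- Sum of `(i-j)²` over the cells of the Young diagram of the partition with row
lengths `t 1 ≥ t 2 ≥ ⋯` (1-based rows and columns). -/
noncomputable def youngSum (m : ℕ) (t : ℕ → ℕ) : ℝ :=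
  ∑ i ∈ Finset.Icc 1 m, ∑ j ∈ Finset.Icc 1 (t i), ((i : ℝ) - (j : ℝ)) ^ 2

/-- Ingram's normalized character of `S_m` at a 3-cycle for the partition `t`. -/
noncomputable def rIngram (m : ℕ) (t : ℕ → ℕ) : ℝ :=
  3 * youngSum m t / ((m : ℝ) * ((m : ℝ) - 1) * ((m : ℝ) - 2)) - 3 / (2 * ((m : ℝ) - 2))

lemma sum_Icc_one_sq (n : ℕ) : ∑ k ∈ Icc 1 n, (k : ℝ) ^ 2 = n * (n + 1) * (2 * n + 1) / 6 := by
  induction n with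
  | zero => simp
  | succ n ih =>
    rw [sum_Icc_succ_top (by omega), ih]
    push_cast
    ring

lemma sum_Icc_one_sub_sq (n : ℕ) :
    ∑ j ∈ Icc 1 n, ((1 : ℝ) - j) ^ 2 = (n - 1) * n * (2 * n - 1) / 6 := by
  induction n with
  | zero => simp
  | succ n ih =>
    rw [sum_Icc_succ_top (by omega), ih]
    push_cast
    ring

lemma sum_Icc_one_add {M : Type*} [AddCommMonoid M] (f : ℕ → M) (a b : ℕ) :
    ∑ k ∈ Icc 1 (a + b), f k = ∑ k ∈ Icc 1 a, f k + ∑ j ∈ Icc 1 b, f (a + j) := by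
  induction b with
  | zero => simp
  | succ b ih =>
    rw [← add_assoc, sum_Icc_succ_top (by omega), ih, sum_Icc_succ_top (by omega), add_assoc]
    rfl

lemma sum_Icc_sub_sq_le_sum_Icc_add_sq (r s u : ℕ) (hr : r ≤ s + 2) :
    ∑ j ∈ Icc 1 u, ((r : ℝ) - j) ^ 2 ≤ ∑ j ∈ Icc 1 u, ((s + j : ℕ) : ℝ) ^ 2 := by
  refine sum_le_sum fun j hj => ?_
  have hj1 : (1 : ℝ) ≤ j := by exact_mod_cast (mem_Icc.mp hj).1
  have hr' : (r : ℝ) ≤ s + 2 := by exact_mod_cast hr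
  push_cast
  exact sq_le_sq' (by linarith) (by linarith)

lemma sum_rows_from_two_le (t : ℕ → ℕ) (hmono : ∀ i, 1 ≤ i → t (i + 1) ≤ t i) (n : ℕ) :
    ∑ i ∈ Icc 2 n, ∑ j ∈ Icc 1 (t i), ((i : ℝ) - j) ^ 2
      ≤ ∑ k ∈ Icc 1 (∑ i ∈ Icc 2 n, t i), (k : ℝ) ^ 2 := by
  induction n with
  | zero => simp
  | succ n ih =>
    rcases Nat.eq_zero_or_pos n with rfl | hn
    · simp
    rw [sum_Icc_succ_top (by omega), sum_Icc_succ_top (by omega), sum_Icc_one_add]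
    rcases Nat.eq_zero_or_pos (t (n + 1)) with hzero | hpos
    · simpa [hzero] using ih
    refine add_le_add ih (sum_Icc_sub_sq_le_sum_Icc_add_sq _ _ _ ?_)
    have hnonempty : ∀ i ∈ Icc 2 n, 1 ≤ t i := fun i hi =>
      hpos.trans_le ((antitoneOn_nat_Ici_of_succ_le hmono) (by simp at hi ⊢; omega)
        (by simp) (by simp at hi ⊢; omega))
    have hcells : n - 1 ≤ ∑ i ∈ Icc 2 n, t i := by
      simpa using card_nsmul_le_sum (Icc 2 n) t 1 hnonempty
    omega

lemma youngSum_le_hook (m : ℕ) (hm : 1 ≤ m) (t : ℕ → ℕ)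
    (hmono : ∀ i, 1 ≤ i → t (i + 1) ≤ t i) :
    youngSum m t ≤ ((t 1 : ℝ) - 1) * t 1 * (2 * t 1 - 1) / 6
      + (∑ i ∈ Icc 2 m, t i : ℕ) * ((∑ i ∈ Icc 2 m, t i : ℕ) + 1)
        * (2 * (∑ i ∈ Icc 2 m, t i : ℕ) + 1) / 6 := by
  have hrows : Icc 1 m = insert 1 (Icc 2 m) := (insert_Icc_add_one_left_eq_Icc hm).symm
  rw [youngSum, hrows, sum_insert (by simp), Nat.cast_one,
    sum_Icc_one_sub_sq, ← sum_Icc_one_sq]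
  exact add_le_add le_rfl (sum_rows_from_two_le t hmono m)

lemma rIngram_hook_eq (m a b : ℝ) (hab : a + b = m) (hm : m ≠ 0) (hm1 : m - 1 ≠ 0)
    (hm2 : m - 2 ≠ 0) :
    3 * ((a - 1) * a * (2 * a - 1) / 6 + b * (b + 1) * (2 * b + 1) / 6) / (m * (m - 1) * (m - 2))
        - 3 / (2 * (m - 2))
      = 1 - 3 * (a - 1) * (m - a) / ((m - 1) * (m - 2)) := by
  subst hab
  field_simp
  ring

theorem rIngram_le_of_large_first_part_general (m : ℕ) (hm : 3 ≤ m) (t : ℕ → ℕ)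
    (hmono : ∀ i, 1 ≤ i → t (i + 1) ≤ t i)
    (hsum : ∑ i ∈ Finset.Icc 1 m, t i = m) :
    rIngram m t ≤ 1 - 3 * ((t 1 : ℝ) - 1) * ((m : ℝ) - (t 1 : ℝ))
      / (((m : ℝ) - 1) * ((m : ℝ) - 2)) := by
  have hm' : (3 : ℝ) ≤ m := by exact_mod_cast hm
  have hfirst_add_rest : (t 1 : ℝ) + (∑ i ∈ Icc 2 m, t i : ℕ) = m := by
    rw [← insert_Icc_add_one_left_eq_Icc (by omega : 1 ≤ m), sum_insert (by simp)] at hsum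
    exact_mod_cast hsum
  rw [← rIngram_hook_eq m _ _ hfirst_add_rest (by positivity) (by linarith) (by linarith), rIngram]
  gcongr
  · exact (mul_pos (mul_pos (by linarith) (by linarith)) (by linarith)).le
  · exact youngSum_le_hook m (by omega) t hmono

/-- For a partition `t` of `m ≥ 3` with `t₁ ≥ m/2`, the normalized character at a
3-cycle satisfies `r(t) ≤ 1 - 3(t₁-1)(m-t₁)/((m-1)(m-2))`. -/
theorem rIngram_le_of_large_first_part (m : ℕ) (hm : 3 ≤ m) (t : ℕ → ℕ)
    (hmono : ∀ i, 1 ≤ i → t (i + 1) ≤ t i)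
    (hsum : ∑ i ∈ Finset.Icc 1 m, t i = m)
    (hsupp : ∀ i, m < i → t i = 0)
    (ht1 : (m : ℝ) / 2 ≤ (t 1 : ℝ)) :
    rIngram m t ≤ 1 - 3 * ((t 1 : ℝ) - 1) * ((m : ℝ) - (t 1 : ℝ))
      / (((m : ℝ) - 1) * ((m : ℝ) - 2)) :=
  rIngram_le_of_large_first_part_general m hm t hmono hsum
end

section
/- Let t be a partition of m ≥ 3 with largest part t₁ ≤ m/2 and largest part of the dual partition t₁' ≤ m/2, and set t₀ = max(t₁, t₁'). Then the normalized character r(t) of the corresponding irreducible representation of S_m at a 3-cycle satisfies r(t) < (t₀−1)(2t₀−1)/(2(m−1)(m−2)) ≤ (t₀−1)/(2(m−2)). -/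
/-! Put `c = t₀` and `G = (c - 1)(2c - 1)`, so that `G / 6` is the mean of `d²` over
`d = 0, …, c - 1`. The cells `(i, j)` with `i ≤ j` form row segments along which `|i - j|`
runs through `0, 1, …`, those with `i > j` form column segments along which it runs through
`1, 2, …`. Since the diagram fits in a `c × c` box, a row segment has at most `c` cells, and a
column segment below the diagonal in column `j ≥ 2` at most `c - 2`; so every segment contributes
at most `G / 6` per cell, except the first column, which may exceed this by `G / 6`. Hence
`6 Σ (i - j)² ≤ (m + 1) G`, and `G < 3m(m - 1)` because `2c ≤ m`. -/

open Finset

/-- Number of (nonzero) parts of the partition, i.e. the largest part of the dual. -/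
def dualFirstPart (m : ℕ) (t : ℕ → ℕ) : ℕ :=
  ((Finset.Icc 1 m).filter (fun i => 0 < t i)).card

theorem six_mul_sum_range_sq (k : ℕ) :
    6 * ∑ d ∈ range k, (d : ℝ) ^ 2 = (k - 1) * k * (2 * k - 1) := by
  induction k with
  | zero => simp
  | succ k ih => rw [sum_range_succ, mul_add, ih]; push_cast; ring

theorem sum_range_six_sq_sub_nonpos {k c : ℕ} (hk : k ≤ c) :
    ∑ d ∈ range k, (6 * (d : ℝ) ^ 2 - (c - 1) * (2 * c - 1)) ≤ 0 := by
  rw [sum_sub_distrib, ← mul_sum, six_mul_sum_range_sq, sum_const, card_range, nsmul_eq_mul,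
    sub_nonpos]
  rcases Nat.eq_zero_or_pos k with rfl | hk0
  · simp
  · have hk0 : (1 : ℝ) ≤ k := by exact_mod_cast hk0
    have hk : (k : ℝ) ≤ c := by exact_mod_cast hk
    nlinarith [mul_le_mul hk (by linarith : 2 * (k : ℝ) - 1 ≤ 2 * c - 1) (by linarith)
      (by linarith)]

theorem sum_range_six_succ_sq_sub_nonpos {k c : ℕ} (hk : k + 2 ≤ c) :
    ∑ d ∈ range k, (6 * ((d : ℝ) + 1) ^ 2 - (c - 1) * (2 * c - 1)) ≤ 0 := by
  have hsq : 6 * ∑ d ∈ range k, ((d : ℝ) + 1) ^ 2 = (k : ℝ) * (k + 1) * (2 * k + 1) := by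
    have := six_mul_sum_range_sq (k + 1)
    rw [sum_range_succ'] at this
    push_cast at this ⊢
    linarith
  rw [sum_sub_distrib, ← mul_sum, hsq, sum_const, card_range, nsmul_eq_mul, sub_nonpos]
  have hk : (k : ℝ) + 2 ≤ c := by exact_mod_cast hk
  have hk0 : (0 : ℝ) ≤ k := k.cast_nonneg
  nlinarith [mul_le_mul (by linarith : (k : ℝ) + 1 ≤ c - 1)
    (by linarith : 2 * (k : ℝ) + 1 ≤ 2 * c - 1) (by linarith) (by linarith)]

theorem sum_range_six_succ_sq_sub_le {k c : ℕ} (hk : k + 1 ≤ c) :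
    ∑ d ∈ range k, (6 * ((d : ℝ) + 1) ^ 2 - (c - 1) * (2 * c - 1)) ≤
      ((c : ℝ) - 1) * (2 * c - 1) := by
  have := sum_range_six_sq_sub_nonpos hk
  rw [sum_range_succ'] at this
  push_cast at this
  linarith

def colLen (m : ℕ) (t : ℕ → ℕ) (j : ℕ) : ℕ :=
  ((Icc 1 m).filter (fun i => j ≤ t i)).card

theorem filter_Icc_eq_Icc_card {m : ℕ} {p : ℕ → Prop} [DecidablePred p]
    (hp : ∀ i i', 1 ≤ i' → i' ≤ i → p i → p i') :
    (Icc 1 m).filter p = Icc 1 ((Icc 1 m).filter p).card := by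
  set A := (Icc 1 m).filter p
  rcases A.eq_empty_or_nonempty with hA | hA
  · rw [hA, card_empty, Icc_eq_empty_of_lt zero_lt_one]
  obtain ⟨s, hs, hs_max⟩ := A.exists_mem_eq_sup hA id
  obtain ⟨hsI, hps⟩ := mem_filter.mp hs
  suffices hAs : A = Icc 1 s by rw [hAs, Nat.card_Icc, Nat.add_sub_cancel]
  ext x
  rw [mem_Icc]
  constructor
  · intro hx
    exact ⟨(mem_Icc.mp (mem_filter.mp hx).1).1, (le_sup (f := id) hx).trans_eq hs_max⟩
  · rintro ⟨hx1, hxs⟩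
    exact mem_filter.mpr
      ⟨mem_Icc.mpr ⟨hx1, hxs.trans (mem_Icc.mp hsI).2⟩, hp s x hx1 hxs hps⟩

section Cells

variable {m : ℕ} {t : ℕ → ℕ}

theorem filter_le_eq_Icc_colLen (ht : AntitoneOn t (Set.Ici 1)) (j : ℕ) :
    (Icc 1 m).filter (fun i => j ≤ t i) = Icc 1 (colLen m t j) :=
  filter_Icc_eq_Icc_card fun _ _ hi' hii' hj =>
    hj.trans (ht (Set.mem_Ici.mpr hi') (Set.mem_Ici.mpr (hi'.trans hii')) hii')

theorem apply_le_apply_one (ht : AntitoneOn t (Set.Ici 1)) {i : ℕ} (hi : 1 ≤ i) : t i ≤ t 1 :=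
  ht (Set.mem_Ici.mpr le_rfl) (Set.mem_Ici.mpr hi) hi

theorem colLen_antitone : Antitone (colLen m t) := fun _ _ hjk =>
  card_le_card fun _ => by simpa only [mem_filter] using And.imp_right hjk.trans

variable {M : Type*} [AddCommMonoid M]

theorem sum_cells_comm (ht : AntitoneOn t (Set.Ici 1)) (f : ℕ → ℕ → M) :
    ∑ i ∈ Icc 1 m, ∑ j ∈ Icc 1 (t i), f i j =
      ∑ j ∈ Icc 1 (t 1), ∑ i ∈ Icc 1 (colLen m t j), f i j := by
  refine sum_comm' fun i j => ?_
  rw [← filter_le_eq_Icc_colLen ht, mem_filter]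
  simp only [mem_Icc]
  constructor
  · rintro ⟨hi, hj1, hj⟩
    exact ⟨⟨hi, hj⟩, hj1, hj.trans (apply_le_apply_one ht hi.1)⟩
  · rintro ⟨⟨hi, hj⟩, hj1, -⟩
    exact ⟨hi, hj1, hj⟩

/-- Cells with `i ≤ j` are grouped by rows and cells with `i > j` by columns; `d` is the
distance of a cell from the diagonal. -/
theorem sum_cells_eq_rows_add_cols (ht : AntitoneOn t (Set.Ici 1)) (φ : ℤ → M) :
    ∑ i ∈ Icc 1 m, ∑ j ∈ Icc 1 (t i), φ (i - j) =
      ∑ i ∈ Icc 1 m, ∑ d ∈ range (t i + 1 - i), φ (-d) +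
        ∑ j ∈ Icc 1 (t 1), ∑ d ∈ range (colLen m t j - j), φ (d + 1) := by
  have hrow : ∀ i ∈ Icc 1 m, ∑ j ∈ (Icc 1 (t i)).filter (i ≤ ·), φ (i - j) =
      ∑ d ∈ range (t i + 1 - i), φ (-d) := by
    intro i hi
    rw [show (Icc 1 (t i)).filter (i ≤ ·) = Ico i (t i + 1) by
      ext j; simp only [mem_filter, mem_Icc, mem_Ico] at hi ⊢; omega, sum_Ico_eq_sum_range]
    simp
  have hcol : ∀ j, ∑ i ∈ (Icc 1 (colLen m t j)).filter (¬ · ≤ j), φ (i - j) =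
      ∑ d ∈ range (colLen m t j - j), φ (d + 1) := by
    intro j
    rw [show (Icc 1 (colLen m t j)).filter (¬ · ≤ j) = Ico (j + 1) (colLen m t j + 1) by
      ext i; simp only [mem_filter, mem_Icc, mem_Ico]; omega, sum_Ico_eq_sum_range,
      Nat.add_sub_add_right]
    exact sum_congr rfl fun d _ => congrArg φ (by push_cast; ring)
  have hsplit : ∀ i ∈ Icc 1 m, ∑ j ∈ Icc 1 (t i), φ (i - j) =
      ∑ j ∈ (Icc 1 (t i)).filter (i ≤ ·), φ (i - j) +
        ∑ j ∈ (Icc 1 (t i)).filter (¬ i ≤ ·), φ (i - j) :=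
    fun i _ => (sum_filter_add_sum_filter_not _ _ _).symm
  rw [sum_congr rfl hsplit, sum_add_distrib, sum_congr rfl hrow,
    ← sum_congr rfl fun j _ => hcol j]
  simp_rw [sum_filter]
  rw [sum_cells_comm ht fun i j => if ¬ i ≤ j then φ (i - j) else 0]

theorem six_mul_youngSum_le (ht : AntitoneOn t (Set.Ici 1)) (hsum : ∑ i ∈ Icc 1 m, t i = m)
    {c : ℕ} (ht1 : t 1 ≤ c) (hcol1 : colLen m t 1 ≤ c) :
    6 * youngSum m t ≤ (m + 1) * ((c - 1) * (2 * c - 1)) := by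
  set G : ℝ := (c - 1) * (2 * c - 1) with hG
  set φ : ℤ → ℝ := fun z => 6 * (z : ℝ) ^ 2 - G
  have hcells :
      6 * youngSum m t - m * G = ∑ i ∈ Icc 1 m, ∑ j ∈ Icc 1 (t i), φ (i - j) := by
    have hm : (m : ℝ) = ∑ i ∈ Icc 1 m, (t i : ℝ) := by exact_mod_cast hsum.symm
    rw [youngSum, mul_sum, hm, sum_mul, ← sum_sub_distrib]
    refine sum_congr rfl fun i _ => ?_
    simp [φ, mul_sum, sum_sub_distrib]
  have hrows : ∑ i ∈ Icc 1 m, ∑ d ∈ range (t i + 1 - i), φ (-d) ≤ 0 := by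
    refine sum_nonpos fun i hi => ?_
    have hi1 := (mem_Icc.mp hi).1
    have hti := apply_le_apply_one ht hi1
    simpa [φ] using sum_range_six_sq_sub_nonpos (k := t i + 1 - i) (c := c) (by omega)
  have hcols : ∑ j ∈ Icc 1 (t 1), ∑ d ∈ range (colLen m t j - j), φ (d + 1) ≤ G := by
    have hG0 : 0 ≤ G := by
      rcases Nat.eq_zero_or_pos c with rfl | hc
      · norm_num [hG]
      · have hc : (1 : ℝ) ≤ c := by exact_mod_cast hc
        exact mul_nonneg (by linarith) (by linarith)
    calc _ ≤ ∑ j ∈ Icc 1 (t 1), if j = 1 then G else 0 := sum_le_sum fun j hj => ?_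
      _ ≤ G := by rw [sum_ite_eq']; split_ifs <;> simp [hG0]
    obtain ⟨hj1, hjt⟩ := mem_Icc.mp hj
    simp only [φ, Int.cast_add, Int.cast_natCast, Int.cast_one]
    split_ifs with h
    · subst h
      exact sum_range_six_succ_sq_sub_le (by omega)
    · have := colLen_antitone (m := m) (t := t) hj1
      by_cases hjc : colLen m t j ≤ j
      · simp [Nat.sub_eq_zero_of_le hjc]
      · exact sum_range_six_succ_sq_sub_nonpos (by omega)
  have := sum_cells_eq_rows_add_cols ht φ (m := m)
  linarith

end Cells

theorem rIngram_lt_and_le_of_six_mul_youngSum_le {m : ℕ} {t : ℕ → ℕ} {c : ℝ}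
    (hm : 3 ≤ m) (hc : 1 ≤ c) (h2c : 2 * c ≤ m)
    (hY : 6 * youngSum m t ≤ (m + 1) * ((c - 1) * (2 * c - 1))) :
    rIngram m t < (c - 1) * (2 * c - 1) / (2 * ((m : ℝ) - 1) * ((m : ℝ) - 2)) ∧
      (c - 1) * (2 * c - 1) / (2 * ((m : ℝ) - 1) * ((m : ℝ) - 2)) ≤
        (c - 1) / (2 * ((m : ℝ) - 2)) := by
  have hm3 : (3 : ℝ) ≤ m := by exact_mod_cast hm
  have hm2 : (0 : ℝ) < m - 2 := by linarith
  have hm1 : (0 : ℝ) < m - 1 := by linarith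
  constructor
  · have hdiff : rIngram m t - (c - 1) * (2 * c - 1) / (2 * ((m : ℝ) - 1) * ((m : ℝ) - 2)) =
        (6 * youngSum m t - m * ((c - 1) * (2 * c - 1)) - 3 * m * (m - 1)) /
          (2 * m * (m - 1) * (m - 2)) := by
      rw [rIngram]
      field_simp
      ring
    have hG : (c - 1) * (2 * c - 1) < 3 * m * (m - 1) := by nlinarith
    rw [← sub_neg, hdiff]
    exact div_neg_of_neg_of_pos (by linarith) (by positivity)
  · rw [div_le_div_iff₀ (by positivity) (by positivity)]
    nlinarith [mul_nonneg (mul_nonneg (sub_nonneg.mpr hc) hm2.le) (sub_nonneg.mpr h2c)]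

theorem rIngram_lt_of_small_parts_general (m : ℕ) (hm : 3 ≤ m) (t : ℕ → ℕ)
    (hmono : ∀ i, 1 ≤ i → t (i + 1) ≤ t i)
    (hsum : ∑ i ∈ Finset.Icc 1 m, t i = m)
    (ht1 : (t 1 : ℝ) ≤ (m : ℝ) / 2)
    (ht1' : (dualFirstPart m t : ℝ) ≤ (m : ℝ) / 2) :
    rIngram m t < ((max (t 1) (dualFirstPart m t) : ℝ) - 1) *
        (2 * (max (t 1) (dualFirstPart m t) : ℝ) - 1)
        / (2 * ((m : ℝ) - 1) * ((m : ℝ) - 2)) ∧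
      ((max (t 1) (dualFirstPart m t) : ℝ) - 1) *
        (2 * (max (t 1) (dualFirstPart m t) : ℝ) - 1)
        / (2 * ((m : ℝ) - 1) * ((m : ℝ) - 2)) ≤
      ((max (t 1) (dualFirstPart m t) : ℝ) - 1) / (2 * ((m : ℝ) - 2)) := by
  have ht : AntitoneOn t (Set.Ici 1) := antitoneOn_nat_Ici_of_succ_le hmono
  have ht1_pos : 1 ≤ t 1 := by
    by_contra! h
    have hzero : ∀ i ∈ Icc 1 m, t i = 0 := fun i hi =>
      Nat.eq_zero_of_le_zero ((apply_le_apply_one ht (mem_Icc.mp hi).1).trans (by omega))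
    rw [sum_eq_zero hzero] at hsum
    omega
  refine rIngram_lt_and_le_of_six_mul_youngSum_le hm ?_ ?_ ?_
  · exact le_max_of_le_left (by exact_mod_cast ht1_pos)
  · linarith [max_le ht1 ht1']
  · exact_mod_cast six_mul_youngSum_le ht hsum (le_max_left _ _) (le_max_right _ _)

/-- For a partition `t` of `m ≥ 3` with `t₁ ≤ m/2` and `t₁' ≤ m/2`, setting
`t₀ = max(t₁, t₁')`, the normalized character at a 3-cycle satisfies
`r(t) < (t₀-1)(2t₀-1)/(2(m-1)(m-2)) ≤ (t₀-1)/(2(m-2))`. -/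
theorem rIngram_lt_of_small_parts (m : ℕ) (hm : 3 ≤ m) (t : ℕ → ℕ)
    (hmono : ∀ i, 1 ≤ i → t (i + 1) ≤ t i)
    (hsum : ∑ i ∈ Finset.Icc 1 m, t i = m)
    (hsupp : ∀ i, m < i → t i = 0)
    (ht1 : (t 1 : ℝ) ≤ (m : ℝ) / 2)
    (ht1' : (dualFirstPart m t : ℝ) ≤ (m : ℝ) / 2) :
    rIngram m t < ((max (t 1) (dualFirstPart m t) : ℝ) - 1) *
        (2 * (max (t 1) (dualFirstPart m t) : ℝ) - 1)
        / (2 * ((m : ℝ) - 1) * ((m : ℝ) - 2)) ∧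
      ((max (t 1) (dualFirstPart m t) : ℝ) - 1) *
        (2 * (max (t 1) (dualFirstPart m t) : ℝ) - 1)
        / (2 * ((m : ℝ) - 1) * ((m : ℝ) - 2)) ≤
      ((max (t 1) (dualFirstPart m t) : ℝ) - 1) / (2 * ((m : ℝ) - 2)) :=
  rIngram_lt_of_small_parts_general m hm t hmono hsum ht1 ht1'
end
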